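/- In the unweighted case p_{ij} = 1/2 for all i ≠ j, the eigenvalue β := 1 − (1 − cos(π/n))/(n − 1) of K has multiplicity at least n − 1. Specifically, the n eigenvectors f_1, …, f_n given by f_i(x) := cos((2·pos_i(x) − 1)π/(2n)) (where pos_i(x) is the position of label i in x) satisfy f_1 + ⋯ + f_n = 0, while any n − 1 of them are linearly independent. -/

import Mathlib

open Finset

/-- Off-diagonal entries of the adjacent-transposition chain: `Koff n p x y = p_{ji}/(n-1)`
if `y` is obtained from `x` by swapping the entries in (0-based) positions `r-1` and `r`
for some `1 ≤ r ≤ n-1`, and `0` otherwise. Here `x r` is the entry in position `r`. -/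
noncomputable def Koff (n : ℕ) (p : Fin n → Fin n → ℝ)
    (x y : Equiv.Perm (Fin n)) : ℝ :=
  ∑ r : Fin n,
    if 1 ≤ (r : ℕ) ∧
        y = x * Equiv.swap (⟨(r : ℕ) - 1, Nat.lt_of_le_of_lt (Nat.sub_le _ _) r.isLt⟩ : Fin n) r
    then p (x r) (x ⟨(r : ℕ) - 1, Nat.lt_of_le_of_lt (Nat.sub_le _ _) r.isLt⟩) / ((n : ℝ) - 1)
    else 0

/-- The transition matrix `K` of the adjacent-transposition chain on permutations. -/
noncomputable def Kmat (n : ℕ) (p : Fin n → Fin n → ℝ) :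
    Matrix (Equiv.Perm (Fin n)) (Equiv.Perm (Fin n)) ℝ :=
  Matrix.of fun x y =>
    if x = y then 1 - ∑ z ∈ Finset.univ.erase x, Koff n p x z
    else Koff n p x y

/-- Unnormalized stationary weight `∏_{r<s} p_{x_r,x_s}`. -/
noncomputable def piUn (n : ℕ) (p : Fin n → Fin n → ℝ) (x : Equiv.Perm (Fin n)) : ℝ :=
  ∏ rs ∈ Finset.univ.filter (fun rs : Fin n × Fin n => rs.1 < rs.2), p (x rs.1) (x rs.2)

/-- The stationary distribution `π`. -/
noncomputable def piDist (n : ℕ) (p : Fin n → Fin n → ℝ) (x : Equiv.Perm (Fin n)) : ℝ :=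
  (∑ y : Equiv.Perm (Fin n), piUn n p y)⁻¹ * piUn n p x

/-- The function `f_i` on permutations: `f_i(x) = cos((2·pos_i(x) - 1)π/(2n))`, where
`pos_i(x) ∈ {1, ..., n}` is the (1-based) position of label `i` in `x`. -/
noncomputable def fvec (n : ℕ) (i : Fin n) (x : Equiv.Perm (Fin n)) : ℝ :=
  Real.cos ((2 * (((x.symm i : ℕ) + 1 : ℕ) : ℝ) - 1) * Real.pi / (2 * n))

/-!
Write `q` for the (0-based) position of `i` in `x`, so that `fvec n i x = cosMode n q`. An adjacent
transposition moves `q` to a neighbouring position, and in the unweighted case each of the `n - 1`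
transpositions has rate `1 / (2(n - 1))`. Hence `K f_i - f_i` is `1 / (2(n - 1))` times the
discrete Laplacian of `cosMode n` on the path `0, …, n - 1` with reflecting ends, and `cosMode n` is
an eigenfunction of that Laplacian with eigenvalue `2 cos (π / n) - 2`.

The reflection `q ↦ n - 1 - q` negates `cosMode n`, so the `f_i` sum to zero. Conversely, comparing
a relation `∑ g_i f_i = 0` at the identity and at the transposition `(a b)` gives `g_a = g_b`, since
`cosMode n` is injective on positions; so any `n - 1` of the `f_i` are independent.
-/

open Matrix

noncomputable def cosMode (n : ℕ) (t : ℝ) : ℝ := Real.cos ((2 * t + 1) * Real.pi / (2 * n))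

lemma cosMode_sub_one_add_cosMode_add_one (n : ℕ) (t : ℝ) :
    cosMode n (t - 1) + cosMode n (t + 1) = 2 * Real.cos (Real.pi / n) * cosMode n t := by
  have hsub : (2 * (t - 1) + 1) * Real.pi / (2 * n) =
      (2 * t + 1) * Real.pi / (2 * n) - Real.pi / n := by ring
  have hadd : (2 * (t + 1) + 1) * Real.pi / (2 * n) =
      (2 * t + 1) * Real.pi / (2 * n) + Real.pi / n := by ring
  rw [cosMode, cosMode, cosMode, hsub, hadd, Real.cos_sub, Real.cos_add]
  ring

lemma cosMode_neg_one (n : ℕ) : cosMode n (-1) = cosMode n 0 := by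
  rw [cosMode, cosMode, ← Real.cos_neg]
  ring_nf

lemma cosMode_reflect {n : ℕ} (hn : (n : ℝ) ≠ 0) (t : ℝ) :
    cosMode n (n - 1 - t) = -cosMode n t := by
  rw [cosMode, cosMode, ← Real.cos_pi_sub]
  congr 1
  field_simp
  ring

lemma cosMode_natCast_self {n : ℕ} (hn : (n : ℝ) ≠ 0) : cosMode n n = cosMode n (n - 1) := by
  have h_neg := cosMode_reflect hn (-1)
  have h_zero := cosMode_reflect hn 0
  rw [sub_neg_eq_add, sub_add_cancel, cosMode_neg_one] at h_neg
  rw [sub_zero] at h_zero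
  rw [h_neg, h_zero]

lemma cosMode_fin_injective (n : ℕ) : Function.Injective (fun q : Fin n => cosMode n (q : ℕ)) := by
  intro a b hab
  have hn : (0 : ℝ) < n := by exact_mod_cast a.pos
  have mem_Icc (q : Fin n) : (2 * (q : ℝ) + 1) * Real.pi / (2 * n) ∈ Set.Icc 0 Real.pi := by
    have hq : (q : ℝ) + 1 ≤ n := by exact_mod_cast q.isLt
    constructor
    · positivity
    · rw [div_le_iff₀ (by positivity)]
      nlinarith [Real.pi_pos]
  have := Real.injOn_cos (mem_Icc a) (mem_Icc b) hab
  field_simp at this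
  ext
  exact_mod_cast (by linarith : (a : ℝ) = b)

/-- The position `r - 1` of `Koff`; truncated at `0`, where the swap becomes the identity. -/
def truncPred {n : ℕ} (r : Fin n) : Fin n :=
  ⟨(r : ℕ) - 1, Nat.lt_of_le_of_lt (Nat.sub_le _ _) r.isLt⟩

@[simp] lemma val_truncPred {n : ℕ} (r : Fin n) : (truncPred r : ℕ) = r - 1 := rfl

lemma val_swap_truncPred {n : ℕ} (r q : Fin n) :
    ((Equiv.swap (truncPred r) r q : Fin n) : ℕ) =
      if (q : ℕ) + 1 = r then (r : ℕ) else if (q : ℕ) = r then (r : ℕ) - 1 else q := by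
  rw [Equiv.swap_apply_def]
  split_ifs <;> simp only [Fin.ext_iff, val_truncPred] at * <;> omega

/-- Only `r = q` and `r = q + 1` move `q`; at the ends the boundary conditions supply the missing
neighbour. -/
lemma sum_swap_truncPred_sub {n : ℕ} (φ : ℝ → ℝ) (h_left : φ (-1) = φ 0)
    (h_right : φ n = φ (n - 1)) (q : Fin n) :
    ∑ r : Fin n, (φ (Equiv.swap (truncPred r) r q : Fin n) - φ q) =
      φ (q - 1) + φ (q + 1) - 2 * φ q := by
  have summand (r : ℕ) :
      φ ((if (q : ℕ) + 1 = r then r else if (q : ℕ) = r then r - 1 else q : ℕ) : ℝ) - φ q =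
        (if (q : ℕ) + 1 = r then φ (q + 1) - φ q else 0) +
          (if (q : ℕ) = r then φ (q - 1) - φ q else 0) := by
    split_ifs with h1 h2 h2
    · omega
    · subst h1; push_cast; ring
    · subst h2
      rcases Nat.eq_zero_or_pos q with hq | hq
      · simp [hq, h_left]
      · push_cast [Nat.cast_sub hq]; ring
    · ring
  simp only [val_swap_truncPred]
  rw [Fin.sum_univ_eq_sum_range (fun r => φ ((if (q : ℕ) + 1 = r then r else
    if (q : ℕ) = r then r - 1 else q : ℕ) : ℝ) - φ q), Finset.sum_congr rfl fun r _ => summand r,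
    Finset.sum_add_distrib, Finset.sum_ite_eq, Finset.sum_ite_eq]
  simp only [Finset.mem_range, q.isLt, if_true]
  split_ifs with hq
  · ring
  · have hqn : ((q : ℕ) : ℝ) + 1 = n := by exact_mod_cast (by omega : (q : ℕ) + 1 = n)
    have : φ (q + 1) = φ q := by rw [hqn, h_right, ← hqn, add_sub_cancel_right]
    linarith

lemma fvec_eq_cosMode (n : ℕ) (i : Fin n) (x : Equiv.Perm (Fin n)) :
    fvec n i x = cosMode n (x.symm i : ℕ) := by
  rw [fvec, cosMode]
  push_cast
  ring_nf

lemma Kmat_mulVec_apply (n : ℕ) (p : Fin n → Fin n → ℝ) (f : Equiv.Perm (Fin n) → ℝ)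
    (x : Equiv.Perm (Fin n)) :
    (Kmat n p *ᵥ f) x = f x + ∑ y, Koff n p x y * (f y - f x) := by
  have h_off : ∑ y, Koff n p x y * (f y - f x) =
      ∑ y ∈ Finset.univ.erase x, Koff n p x y * (f y - f x) := by
    rw [← Finset.add_sum_erase _ _ (Finset.mem_univ x), sub_self, mul_zero, zero_add]
  simp only [mulVec, dotProduct]
  rw [← Finset.add_sum_erase _ _ (Finset.mem_univ x), h_off,
    Finset.sum_congr rfl fun y hy => by
      rw [Kmat, Matrix.of_apply, if_neg (Finset.ne_of_mem_erase hy).symm]]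
  simp only [Kmat, Matrix.of_apply, if_true, mul_sub, Finset.sum_sub_distrib, ← Finset.sum_mul]
  ring

lemma sum_Koff_mul (n : ℕ) (p : Fin n → Fin n → ℝ) (g : Equiv.Perm (Fin n) → ℝ)
    (x : Equiv.Perm (Fin n)) :
    ∑ y, Koff n p x y * g y = ∑ r : Fin n,
      if 1 ≤ (r : ℕ) then p (x r) (x (truncPred r)) / ((n : ℝ) - 1) *
        g (x * Equiv.swap (truncPred r) r) else 0 := by
  change ∑ y, (∑ r : Fin n, if 1 ≤ (r : ℕ) ∧ y = x * Equiv.swap (truncPred r) r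
    then p (x r) (x (truncPred r)) / ((n : ℝ) - 1) else 0) * g y = _
  simp only [Finset.sum_mul]
  rw [Finset.sum_comm]
  simp [ite_and, Finset.sum_ite_eq']

lemma Kmat_mulVec_fvec_apply {n : ℕ} {p : Fin n → Fin n → ℝ}
    (hp : ∀ i j : Fin n, i ≠ j → p i j = 1 / 2) (i : Fin n) (x : Equiv.Perm (Fin n)) :
    (Kmat n p *ᵥ fvec n i) x =
      (1 - (1 - Real.cos (Real.pi / n)) / ((n : ℝ) - 1)) * fvec n i x := by
  have hn : (n : ℝ) ≠ 0 := by exact_mod_cast i.pos.ne'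
  set q := x.symm i
  have h_term (r : Fin n) : (if 1 ≤ (r : ℕ) then p (x r) (x (truncPred r)) / ((n : ℝ) - 1) *
      (fvec n i (x * Equiv.swap (truncPred r) r) - fvec n i x) else 0) =
      1 / 2 / ((n : ℝ) - 1) *
        (cosMode n (Equiv.swap (truncPred r) r q : ℕ) - cosMode n (q : ℕ)) := by
    rw [fvec_eq_cosMode, fvec_eq_cosMode]
    split_ifs with hr
    · have h_ne : x r ≠ x (truncPred r) := fun h => by
        have := congrArg Fin.val (x.injective h)
        rw [val_truncPred] at this
        omega
      rw [hp _ _ h_ne]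
      rfl
    · have h_zero : truncPred r = r := Fin.ext (by rw [val_truncPred]; omega)
      rw [h_zero, Equiv.swap_self, Equiv.refl_apply, sub_self, mul_zero]
  rw [Kmat_mulVec_apply, sum_Koff_mul, Finset.sum_congr rfl fun r _ => h_term r, ← Finset.mul_sum,
    sum_swap_truncPred_sub (cosMode n) (cosMode_neg_one n) (cosMode_natCast_self hn),
    cosMode_sub_one_add_cosMode_add_one, fvec_eq_cosMode]
  ring

lemma sum_cosMode_eq_zero (n : ℕ) : ∑ q : Fin n, cosMode n (q : ℕ) = 0 := by
  rcases Nat.eq_zero_or_pos n with rfl | hn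
  · simp
  have h_reflect : ∑ q ∈ Finset.range n, cosMode n ((n - 1 - q : ℕ) : ℝ) =
      -∑ q ∈ Finset.range n, cosMode n (q : ℝ) := by
    rw [← Finset.sum_neg_distrib]
    refine Finset.sum_congr rfl fun q hq => ?_
    have hq : q ≤ n - 1 := by rw [Finset.mem_range] at hq; omega
    rw [Nat.cast_sub hq, Nat.cast_sub (by omega : 1 ≤ n), Nat.cast_one,
      cosMode_reflect (by positivity)]
  rw [Finset.sum_range_reflect (fun q => cosMode n (q : ℝ))] at h_reflect
  rw [Fin.sum_univ_eq_sum_range (fun q => cosMode n (q : ℝ))]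
  linarith

lemma sum_fvec (n : ℕ) : ∑ i : Fin n, fvec n i = 0 := by
  funext x
  simp only [Finset.sum_apply, fvec_eq_cosMode, Pi.zero_apply]
  rw [Equiv.sum_comp x.symm (fun q => cosMode n (q : ℕ)), sum_cosMode_eq_zero]

/-- Evaluate the relation at `1` and at `swap a b`: the difference is
`(g a - g b) * (cosMode n a - cosMode n b)`. -/
lemma coeff_eq_of_sum_smul_fvec_eq_zero {n : ℕ} {g : Fin n → ℝ}
    (hg : ∑ i, g i • fvec n i = 0) (a b : Fin n) : g a = g b := by
  by_contra h_ne
  have hab : a ≠ b := fun h => h_ne (congrArg g h)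
  have h_one := congrFun hg (Equiv.refl _)
  have h_swap := congrFun hg (Equiv.swap a b)
  simp only [Finset.sum_apply, Pi.smul_apply, smul_eq_mul, fvec_eq_cosMode, Pi.zero_apply,
    Equiv.refl_symm, Equiv.refl_apply, Equiv.symm_swap] at h_one h_swap
  rw [← Equiv.sum_comp (Equiv.swap a b)] at h_swap
  simp only [Equiv.swap_apply_self] at h_swap
  have h_pair : (g a - g b) * (cosMode n (a : ℕ) - cosMode n (b : ℕ)) = 0 := by
    calc (g a - g b) * (cosMode n (a : ℕ) - cosMode n (b : ℕ))
        = ∑ k, (g k - g (Equiv.swap a b k)) * cosMode n (k : ℕ) := by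
          rw [Fintype.sum_eq_add a b hab fun k hk => by
            rw [Equiv.swap_apply_of_ne_of_ne hk.1 hk.2, sub_self, zero_mul]]
          rw [Equiv.swap_apply_left, Equiv.swap_apply_right]
          ring
      _ = 0 := by simp only [sub_mul, Finset.sum_sub_distrib, h_one, h_swap, sub_zero]
  rcases mul_eq_zero.mp h_pair with h | h
  · exact h_ne (sub_eq_zero.mp h)
  · exact hab (cosMode_fin_injective n (sub_eq_zero.mp h))

lemma linearIndependent_subtype_ne_of_coeff_eq {ι R M : Type*} [Fintype ι] [DecidableEq ι]
    [Ring R] [AddCommGroup M] [Module R M] {v : ι → M}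
    (hv : ∀ g : ι → R, ∑ i, g i • v i = 0 → ∀ a b, g a = g b) (i₀ : ι) :
    LinearIndependent R (fun i : {i // i ≠ i₀} => v i) := by
  rw [Fintype.linearIndependent_iff]
  intro g hg j
  let G : ι → R := fun i => if h : i = i₀ then 0 else g ⟨i, h⟩
  have hG : ∑ i, G i • v i = 0 := by
    rw [← Fintype.sum_subtype_add_sum_subtype (fun i => i ≠ i₀), ← hg]
    have h_ne (i : {i // i ≠ i₀}) : G i = g i := dif_neg i.2
    have h_eq (i : {i // ¬i ≠ i₀}) : G i = 0 := dif_pos (not_not.mp i.2)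
    simp only [h_ne, h_eq, zero_smul, Finset.sum_const_zero, add_zero]
  simpa [G, j.2] using hv G hG j i₀

theorem second_eigenvalue_multiplicity_general (n : ℕ) (p : Fin n → Fin n → ℝ)
    (hp : ∀ i j : Fin n, i ≠ j → p i j = 1 / 2) :
    (∀ i : Fin n, (Kmat n p).mulVec (fvec n i) =
      (1 - (1 - Real.cos (Real.pi / n)) / ((n : ℝ) - 1)) • fvec n i) ∧
    (∑ i : Fin n, fvec n i) = 0 ∧
    (∀ i₀ : Fin n,
      LinearIndependent ℝ (fun i : {i : Fin n // i ≠ i₀} => fvec n (i : Fin n))) ∧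
    n - 1 ≤ Module.finrank ℝ
      (Module.End.eigenspace ((Kmat n p).mulVecLin)
        (1 - (1 - Real.cos (Real.pi / n)) / ((n : ℝ) - 1))) := by
  have h_eigen (i : Fin n) := funext (Kmat_mulVec_fvec_apply hp i)
  have h_indep (i₀ : Fin n) := linearIndependent_subtype_ne_of_coeff_eq
    (fun _ hg => coeff_eq_of_sum_smul_fvec_eq_zero hg) i₀
  refine ⟨h_eigen, sum_fvec n, h_indep, ?_⟩
  rcases Nat.eq_zero_or_pos n with rfl | hn
  · exact Nat.zero_le _
  let i₀ : Fin n := ⟨0, hn⟩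
  calc n - 1 = Fintype.card {i : Fin n // i ≠ i₀} := by simp
    _ = Module.finrank ℝ (Submodule.span ℝ (Set.range fun i : {i // i ≠ i₀} => fvec n i)) :=
      (finrank_span_eq_card (h_indep i₀)).symm
    _ ≤ _ := Submodule.finrank_mono <| Submodule.span_le.mpr <| Set.range_subset_iff.mpr
      fun i => Module.End.mem_eigenspace_iff.mpr (h_eigen i)

/-- in the unweighted case, the eigenvalue `β = 1 - (1 - cos(π/n))/(n-1)`
of `K` has multiplicity at least `n - 1`.  Specifically, the `n` eigenvectors
`f_1, ..., f_n` satisfy `f_1 + ⋯ + f_n = 0`, while any `n - 1` of them are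
linearly independent. -/
theorem second_eigenvalue_multiplicity (n : ℕ) (hn : 2 ≤ n) (p : Fin n → Fin n → ℝ)
    (hp : ∀ i j : Fin n, i ≠ j → p i j = 1 / 2) :
    (∀ i : Fin n, (Kmat n p).mulVec (fvec n i) =
      (1 - (1 - Real.cos (Real.pi / n)) / ((n : ℝ) - 1)) • fvec n i) ∧
    (∑ i : Fin n, fvec n i) = 0 ∧
    (∀ i₀ : Fin n,
      LinearIndependent ℝ (fun i : {i : Fin n // i ≠ i₀} => fvec n (i : Fin n))) ∧
    n - 1 ≤ Module.finrank ℝ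
      (Module.End.eigenspace ((Kmat n p).mulVecLin)
        (1 - (1 - Real.cos (Real.pi / n)) / ((n : ℝ) - 1))) :=
  second_eigenvalue_multiplicity_general n p hp
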